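/- arXiv:1403.6590 — 2 statements merged into one kernel-verified Lean document; each statement's English description precedes it below -/
import Mathlib

section
/- For positive semidefinite matrices M and N of the same finite size, the squared Frobenius (Hilbert–Schmidt) norm of √M − √N is at most the trace norm of M − N, i.e. ‖√M − √N‖₂² ≤ ‖M − N‖₁. -/
open Matrix
open ComplexOrder
open scoped Classical

/-- positive semidefinite square root (junk value `0` off the PSD matrices) -/
noncomputable def msqrt {n : Type*} [Fintype n] [DecidableEq n] (A : Matrix n n ℂ) :
    Matrix n n ℂ :=
  if h : A.PosSemidef then
    h.1.eigenvectorUnitary.1 * diagonal ((↑) ∘ (√·) ∘ h.1.eigenvalues) *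
      (star h.1.eigenvectorUnitary : Matrix n n ℂ)
  else 0

/-- matrix logarithm via the Hermitian functional calculus (junk value `0` otherwise) -/
noncomputable def mlog {n : Type*} [Fintype n] [DecidableEq n] (A : Matrix n n ℂ) :
    Matrix n n ℂ :=
  if h : A.IsHermitian then h.cfc Real.log else 0

/-- matrix logarithm taken on the support (eigenvalue `0` is sent to `0`) -/
noncomputable def mlog0 {n : Type*} [Fintype n] [DecidableEq n] (A : Matrix n n ℂ) :
    Matrix n n ℂ :=
  if h : A.IsHermitian then h.cfc (fun x => if x = 0 then 0 else Real.log x) else 0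

/-- matrix exponential -/
noncomputable def mexp {n : Type*} [Fintype n] [DecidableEq n] (A : Matrix n n ℂ) :
    Matrix n n ℂ :=
  NormedSpace.exp A

/-- Frobenius (Hilbert–Schmidt) norm `‖X‖₂ = (Tr (Xᴴ X))^(1/2)` -/
noncomputable def frob {n : Type*} [Fintype n] [DecidableEq n] (X : Matrix n n ℂ) : ℝ :=
  Real.sqrt (Matrix.trace (Xᴴ * X)).re

/-- trace norm `‖X‖₁ = Tr √(Xᴴ X)` -/
noncomputable def trNorm {n : Type*} [Fintype n] [DecidableEq n] (X : Matrix n n ℂ) : ℝ :=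
  (Matrix.trace (msqrt (Xᴴ * X))).re

/-- relative entropy `S(ρ‖σ) = Tr (ρ (log ρ − log σ))` -/
noncomputable def relEnt {n : Type*} [Fintype n] [DecidableEq n]
    (rho sigma : Matrix n n ℂ) : ℝ :=
  (Matrix.trace (rho * (mlog rho - mlog sigma))).re

/-- relative entropy with logarithms taken on the support -/
noncomputable def relEnt0 {n : Type*} [Fintype n] [DecidableEq n]
    (rho sigma : Matrix n n ℂ) : ℝ :=
  (Matrix.trace (rho * (mlog0 rho - mlog0 sigma))).re

/-- von Neumann entropy `S(τ) = −Tr (τ log τ)` -/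
noncomputable def vN {n : Type*} [Fintype n] [DecidableEq n] (rho : Matrix n n ℂ) : ℝ :=
  -(Matrix.trace (rho * mlog rho)).re

section Tripartite

variable {α β γ : Type*} [Fintype α] [DecidableEq α] [Fintype β] [DecidableEq β]
  [Fintype γ] [DecidableEq γ]

/-- partial trace over the `B` system: `ρ_AC` -/
noncomputable def ptrB (M : Matrix (α × β × γ) (α × β × γ) ℂ) : Matrix (α × γ) (α × γ) ℂ :=
  fun p q => ∑ b : β, M (p.1, b, p.2) (q.1, b, q.2)

/-- partial trace over the `A` system: `ρ_BC` -/
noncomputable def ptrA (M : Matrix (α × β × γ) (α × β × γ) ℂ) : Matrix (β × γ) (β × γ) ℂ :=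
  fun p q => ∑ a : α, M (a, p.1, p.2) (a, q.1, q.2)

/-- partial trace over the `A` and `B` systems: `ρ_C` -/
noncomputable def ptrAB (M : Matrix (α × β × γ) (α × β × γ) ℂ) : Matrix γ γ ℂ :=
  fun c c' => ∑ a : α, ∑ b : β, M (a, b, c) (a, b, c')

/-- embedding `X_AC ↦ X_AC ⊗ I_B` -/
def embAC (X : Matrix (α × γ) (α × γ) ℂ) : Matrix (α × β × γ) (α × β × γ) ℂ :=
  fun p q => if p.2.1 = q.2.1 then X (p.1, p.2.2) (q.1, q.2.2) else 0

/-- embedding `X_BC ↦ I_A ⊗ X_BC` -/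
def embBC (X : Matrix (β × γ) (β × γ) ℂ) : Matrix (α × β × γ) (α × β × γ) ℂ :=
  fun p q => if p.1 = q.1 then X p.2 q.2 else 0

/-- embedding `X_C ↦ I_A ⊗ I_B ⊗ X_C` -/
def embC (X : Matrix γ γ ℂ) : Matrix (α × β × γ) (α × β × γ) ℂ :=
  fun p q => if p.1 = q.1 ∧ p.2.1 = q.2.1 then X p.2.2 q.2.2 else 0

/-- conditional mutual information `I(A:B|C)_ρ = S(ρ_AC)+S(ρ_BC)−S(ρ_ABC)−S(ρ_C)` -/
noncomputable def cmi (rho : Matrix (α × β × γ) (α × β × γ) ℂ) : ℝ :=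
  vN (ptrB rho) + vN (ptrA rho) - vN rho - vN (ptrAB rho)

/-- the operator `exp(log σ_AC + log σ_BC − log σ_C)` -/
noncomputable def sigOp (sigma : Matrix (α × β × γ) (α × β × γ) ℂ) :
    Matrix (α × β × γ) (α × β × γ) ℂ :=
  mexp (embAC (mlog (ptrB sigma)) + embBC (mlog (ptrA sigma)) - embC (mlog (ptrAB sigma)))

/-- the operator `exp(log ρ_AC + log ρ_BC)` -/
noncomputable def sigOp2 (sigma : Matrix (α × β × γ) (α × β × γ) ℂ) :
    Matrix (α × β × γ) (α × β × γ) ℂ :=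
  mexp (embAC (mlog (ptrB sigma)) + embBC (mlog (ptrA sigma)))

end Tripartite

/-! Put `A = √M`, `B = √N`, `D = A - B`, `S = A + B`, so that `DS + SD = 2 (M - N)` and
`-S ≤ D ≤ S`. In an orthonormal eigenbasis `(uᵢ)` of `D` with eigenvalues `λᵢ`, the diagonal
entries of `M - N` are `λᵢ ⟨uᵢ, S uᵢ⟩`, and `⟨uᵢ, S uᵢ⟩ ≥ |λᵢ|`; hence
`‖D‖₂² = ∑ λᵢ² ≤ ∑ |⟨uᵢ, (M - N) uᵢ⟩| ≤ Tr |M - N|`, the last step because `-|X| ≤ X ≤ |X|`. -/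

open scoped MatrixOrder

section

variable {n : Type*} [Fintype n] [DecidableEq n]

lemma msqrt_eq_sqrt {A : Matrix n n ℂ} (hA : A.PosSemidef) : msqrt A = CFC.sqrt A := by
  rw [msqrt, dif_pos hA, CFC.sqrt_eq_cfc, cfc_nnreal_eq_real _ A (ha := hA.nonneg), hA.1.cfc_eq,
    IsHermitian.cfc, Unitary.conjStarAlgAut_apply]
  congr 2
  ext i j
  rw [diagonal_apply, diagonal_apply]
  split_ifs <;> simp [max_eq_left (hA.eigenvalues_nonneg i)]

lemma msqrt_posSemidef {A : Matrix n n ℂ} (hA : A.PosSemidef) : (msqrt A).PosSemidef := by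
  rw [msqrt_eq_sqrt hA]
  exact (CFC.sqrt_nonneg A).posSemidef

lemma msqrt_mul_self {A : Matrix n n ℂ} (hA : A.PosSemidef) : msqrt A * msqrt A = A := by
  rw [msqrt_eq_sqrt hA, CFC.sqrt_mul_sqrt_self A hA.nonneg]

lemma trNorm_eq_re_trace_abs (X : Matrix n n ℂ) : trNorm X = (CFC.abs X).trace.re := by
  rw [trNorm, msqrt_eq_sqrt (posSemidef_conjTranspose_mul_self X), CFC.abs, star_eq_conjTranspose]

lemma frob_sq (X : Matrix n n ℂ) : frob X ^ 2 = (Xᴴ * X).trace.re := by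
  have h := (posSemidef_conjTranspose_mul_self X).trace_nonneg
  rw [frob, Real.sq_sqrt (Complex.nonneg_iff.mp h).1]

lemma re_trace_eq_sum_re_diag_conj {U : Matrix n n ℂ} (hU : U ∈ unitaryGroup n ℂ)
    (Y : Matrix n n ℂ) : Y.trace.re = ∑ i, ((star U * Y * U) i i).re := by
  have h : (star U * Y * U).trace = Y.trace := by
    rw [trace_mul_cycle, mem_unitaryGroup_iff.mp hU, one_mul]
  rw [← h, trace, Complex.re_sum]
  rfl

lemma abs_re_diag_conj_le {X S : Matrix n n ℂ} (hlo : -S ≤ X) (hhi : X ≤ S) (U : Matrix n n ℂ)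
    (i : n) : |((star U * X * U) i i).re| ≤ ((star U * S * U) i i).re := by
  have key : ∀ Y : Matrix n n ℂ, 0 ≤ Y → 0 ≤ ((star U * Y * U) i i).re := fun Y hY =>
    (Complex.nonneg_iff.mp (star_left_conjugate_nonneg hY U).posSemidef.diag_nonneg).1
  have h₁ := key (S + X) (by simpa [neg_le_iff_add_nonneg'] using hlo)
  have h₂ := key (S - X) (sub_nonneg.mpr hhi)
  simp only [mul_add, mul_sub, add_mul, sub_mul, Matrix.add_apply, Matrix.sub_apply, Complex.add_re,
    Complex.sub_re] at h₁ h₂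
  exact abs_le.mpr ⟨by linarith, by linarith⟩

lemma neg_abs_le_self_le_abs {X : Matrix n n ℂ} (hX : X.IsHermitian) :
    -CFC.abs X ≤ X ∧ X ≤ CFC.abs X := by
  constructor
  · rw [neg_le_iff_add_nonneg', CFC.abs_add_self X hX]
    exact smul_nonneg zero_le_two (CFC.posPart_nonneg X)
  · rw [← sub_nonneg, CFC.abs_sub_self X hX]
    exact smul_nonneg zero_le_two (CFC.negPart_nonneg X)

lemma Matrix.IsHermitian.star_eigenvectorUnitary_mul_mul_self {D : Matrix n n ℂ}
    (hD : D.IsHermitian) :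
    star (hD.eigenvectorUnitary : Matrix n n ℂ) * D * hD.eigenvectorUnitary =
      diagonal (Complex.ofReal ∘ hD.eigenvalues) := by
  simpa [Unitary.conjStarAlgAut_star_apply] using hD.conjStarAlgAut_star_eigenvectorUnitary

lemma star_mul_mul_mul_eq_of_mul_star_eq_one {U : Matrix n n ℂ} (hU : U * star U = 1)
    (D S : Matrix n n ℂ) : star U * (D * S) * U = star U * D * U * (star U * S * U) := by
  rw [show star U * D * U * (star U * S * U) = star U * D * (U * star U) * S * U by
    simp only [mul_assoc], hU, mul_one]
  simp only [mul_assoc]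

lemma frob_sq_le_trNorm_of_anticommutator {D S X : Matrix n n ℂ} (hD : D.IsHermitian)
    (hX : X.IsHermitian) (hlo : -S ≤ D) (hhi : D ≤ S) (hDSX : D * S + S * D = X + X) :
    frob D ^ 2 ≤ trNorm X := by
  have hdiag := hD.star_eigenvectorUnitary_mul_mul_self
  have hU := hD.eigenvectorUnitary.2
  generalize (hD.eigenvectorUnitary : Matrix n n ℂ) = U at hdiag hU
  generalize hD.eigenvalues = ev at hdiag
  have hconj := star_mul_mul_mul_eq_of_mul_star_eq_one (mem_unitaryGroup_iff.mp hU)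
  have hD_diag (i : n) : ((star U * D * U) i i).re = ev i := by simp [hdiag]
  have hev_le (i : n) : |ev i| ≤ ((star U * S * U) i i).re :=
    hD_diag i ▸ abs_re_diag_conj_le hlo hhi U i
  have hX_diag (i : n) : ((star U * X * U) i i).re = ev i * ((star U * S * U) i i).re := by
    have h := congrArg (fun Y => ((star U * Y * U) i i).re) hDSX
    simp only [mul_add, add_mul, Matrix.add_apply, Complex.add_re, hconj, hdiag, diagonal_mul,
      mul_diagonal, Function.comp_apply, Complex.re_ofReal_mul, Complex.re_mul_ofReal] at h
    linarith
  calc frob D ^ 2 = ∑ i, ev i ^ 2 := by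
        rw [frob_sq, hD.eq, re_trace_eq_sum_re_diag_conj hU]
        refine Finset.sum_congr rfl fun i _ => ?_
        rw [hconj, hdiag, diagonal_mul, Function.comp_apply, Complex.re_ofReal_mul, ← hdiag,
          hD_diag, sq]
    _ ≤ ∑ i, |((star U * X * U) i i).re| := by
        refine Finset.sum_le_sum fun i _ => ?_
        rw [hX_diag, abs_mul, ← sq_abs, sq]
        exact mul_le_mul_of_nonneg_left ((hev_le i).trans (le_abs_self _)) (abs_nonneg _)
    _ ≤ ∑ i, ((star U * CFC.abs X * U) i i).re :=
        Finset.sum_le_sum fun i _ => abs_re_diag_conj_le (neg_abs_le_self_le_abs hX).1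
          (neg_abs_le_self_le_abs hX).2 U i
    _ = trNorm X := by rw [trNorm_eq_re_trace_abs, re_trace_eq_sum_re_diag_conj hU]

end

theorem powers_stormer {n : Type*} [Fintype n] [DecidableEq n]
    (M N : Matrix n n ℂ) (hM : M.PosSemidef) (hN : N.PosSemidef) :
    frob (msqrt M - msqrt N) ^ 2 ≤ trNorm (M - N) := by
  have hMN : (M - N).IsHermitian := hM.1.sub hN.1
  have hA := msqrt_posSemidef hM
  have hB := msqrt_posSemidef hN
  have hAA := msqrt_mul_self hM
  have hBB := msqrt_mul_self hN
  generalize msqrt M = A at hA hAA ⊢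
  generalize msqrt N = B at hB hBB ⊢
  subst hAA hBB
  refine frob_sq_le_trNorm_of_anticommutator (S := A + B) (hA.1.sub hB.1) hMN ?_ ?_
    (by noncomm_ring)
  · rw [neg_le_iff_add_nonneg', show A + B + (A - B) = A + A by abel]
    exact add_nonneg hA.nonneg hA.nonneg
  · exact (sub_le_self A hB.nonneg).trans (le_add_of_nonneg_right hB.nonneg)
end

section
/- For a positive definite tripartite state ρ_ABC, S(ρ_AC) + S(ρ_BC) − S(ρ_ABC) ≥ −2 log Tr(√ρ_ABC √(exp(log ρ_AC + log ρ_BC))). -/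
open Matrix
open ComplexOrder
open scoped Classical

/-!
Put `H = log ρ_AC ⊗ I_B + I_A ⊗ log ρ_BC` and `σ = exp H`. Taking partial traces,
`S(ρ_AC) + S(ρ_BC) − S(ρ) = Tr ρ (log ρ − H) = S(ρ‖σ)`, and `σ` is positive definite, so it suffices
that `S(ρ‖σ) ≥ −2 log Tr(√ρ √σ)` for every state `ρ` and every positive definite `σ`.
In eigenbases `ρ = ∑ pᵢ |uᵢ⟩⟨uᵢ|`, `σ = ∑ qⱼ |vⱼ⟩⟨vⱼ|` both sides are sums weighted by
`cᵢⱼ = |⟨uᵢ, vⱼ⟩|²`, whose rows sum to one, and the inequality is Jensen's inequality for the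
concave `log` with the probability weights `pᵢ cᵢⱼ` at the points `√(qⱼ / pᵢ)`.
-/

section MatrixFunctions

variable {n : Type*} [Fintype n] [DecidableEq n]

lemma isHermitian_mlog (A : Matrix n n ℂ) : (mlog A).IsHermitian := by
  unfold mlog
  split_ifs with hA
  · rw [← hA.cfc_eq]
    exact cfc_predicate Real.log A
  · exact isHermitian_zero

lemma mexp_eq_cfc {A : Matrix n n ℂ} (hA : A.IsHermitian) : mexp A = cfc Real.exp A := by
  open scoped Matrix.Norms.L2Operator in
  rw [mexp, CFC.real_exp_eq_normedSpace_exp hA]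

lemma mlog_mexp {A : Matrix n n ℂ} (hA : A.IsHermitian) : mlog (mexp A) = A := by
  have hexp : (mexp A).IsHermitian := by
    rw [mexp_eq_cfc hA]
    exact cfc_predicate Real.exp A
  rw [mlog, dif_pos hexp, ← hexp.cfc_eq, mexp]
  open scoped Matrix.Norms.L2Operator in
  exact CFC.log_exp A hA

lemma posDef_mexp {A : Matrix n n ℂ} (hA : A.IsHermitian) : (mexp A).PosDef := by
  open scoped MatrixOrder in
  rw [← isStrictlyPositive_iff_posDef, mexp_eq_cfc hA]
  exact (cfc_isStrictlyPositive_iff Real.exp A).mpr fun x _ => Real.exp_pos x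

end MatrixFunctions

section Overlap

variable {n : Type*} [Fintype n] [DecidableEq n] {A B : Matrix n n ℂ}

noncomputable def eigenOverlap (hA : A.IsHermitian) (hB : B.IsHermitian) (i j : n) : ℝ :=
  Complex.normSq ((star (hA.eigenvectorUnitary : Matrix n n ℂ) * hB.eigenvectorUnitary) i j)

lemma sum_eigenOverlap (hA : A.IsHermitian) (hB : B.IsHermitian) (i : n) :
    ∑ j, eigenOverlap hA hB i j = 1 := by
  set W : unitary (Matrix n n ℂ) := star hA.eigenvectorUnitary * hB.eigenvectorUnitary
  have hW : ((W : Matrix n n ℂ) * star (W : Matrix n n ℂ)) i i = 1 := by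
    rw [Unitary.mul_star_self_of_mem W.prop, one_apply_eq]
  rw [mul_apply] at hW
  have hsum : ∑ j, (eigenOverlap hA hB i j : ℂ) = 1 := by
    simpa [eigenOverlap, W, Complex.mul_conj] using hW
  exact_mod_cast hsum

lemma eigenOverlap_self (hA : A.IsHermitian) (i j : n) :
    eigenOverlap hA hA i j = (1 : Matrix n n ℝ) i j := by
  rw [eigenOverlap, Unitary.coe_star_mul_self]
  by_cases h : i = j <;> simp [h, one_apply]

lemma trace_cfc_mul_cfc (hA : A.IsHermitian) (hB : B.IsHermitian) (f g : ℝ → ℝ) :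
    trace (hA.cfc f * hB.cfc g) =
      ∑ i, ∑ j, (f (hA.eigenvalues i) * g (hB.eigenvalues j) * eigenOverlap hA hB i j : ℝ) := by
  set U := (hA.eigenvectorUnitary : Matrix n n ℂ)
  set V := (hB.eigenvectorUnitary : Matrix n n ℂ)
  have hcycle : trace (hA.cfc f * hB.cfc g) = trace
      (diagonal (RCLike.ofReal ∘ f ∘ hA.eigenvalues) * (star U * V) *
        (diagonal (RCLike.ofReal ∘ g ∘ hB.eigenvalues) * star (star U * V))) := by
    simp only [IsHermitian.cfc, Unitary.conjStarAlgAut_apply, star_mul, star_star, Matrix.mul_assoc]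
    rw [trace_mul_comm]
    simp only [Matrix.mul_assoc]
    rfl
  rw [hcycle, trace, Complex.ofReal_sum]
  refine Finset.sum_congr rfl fun i _ => ?_
  rw [diag_apply, mul_apply, Complex.ofReal_sum]
  refine Finset.sum_congr rfl fun j _ => ?_
  rw [diagonal_mul, diagonal_mul, star_apply, mul_mul_mul_comm, Complex.star_def,
    Complex.mul_conj]
  push_cast
  rfl

end Overlap

open Finset in
theorem neg_two_mul_log_sum_sqrt_le {ι κ : Type*} [Fintype ι] [Fintype κ] {p : ι → ℝ}
    {q : κ → ℝ} {c : ι → κ → ℝ} (hp : ∀ i, 0 < p i) (hp1 : ∑ i, p i = 1) (hq : ∀ j, 0 < q j)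
    (hc : ∀ i j, 0 ≤ c i j) (hc1 : ∀ i, ∑ j, c i j = 1) :
    -2 * Real.log (∑ i, ∑ j, √(p i) * √(q j) * c i j) ≤
      ∑ i, p i * Real.log (p i) - ∑ i, ∑ j, p i * Real.log (q j) * c i j := by
  have hw1 : ∑ x : ι × κ, p x.1 * c x.1 x.2 = 1 := by
    simp only [Fintype.sum_prod_type, ← mul_sum, hc1, mul_one, hp1]
  have jensen := strictConcaveOn_log_Ioi.concaveOn.le_map_sum (t := univ)
    (w := fun x : ι × κ => p x.1 * c x.1 x.2) (p := fun x => √(q x.2) / √(p x.1))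
    (fun x _ => mul_nonneg (hp x.1).le (hc x.1 x.2)) hw1
    (fun x _ => div_pos (Real.sqrt_pos.2 (hq x.2)) (Real.sqrt_pos.2 (hp x.1)))
  have hmean (i : ι) (j : κ) : p i * c i j * (√(q j) / √(p i)) = √(p i) * √(q j) * c i j := by
    rw [← mul_div_assoc, div_eq_iff (Real.sqrt_pos.2 (hp i)).ne']
    linear_combination -(c i j * √(q j)) * Real.mul_self_sqrt (hp i).le
  have hlog (i : ι) (j : κ) : p i * c i j * Real.log (√(q j) / √(p i)) =
      (p i * Real.log (q j) * c i j - p i * Real.log (p i) * c i j) / 2 := by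
    rw [Real.log_div (Real.sqrt_pos.2 (hq j)).ne' (Real.sqrt_pos.2 (hp i)).ne',
      Real.log_sqrt (hq j).le, Real.log_sqrt (hp i).le]
    ring
  have hentropy : ∑ i, ∑ j, p i * Real.log (p i) * c i j = ∑ i, p i * Real.log (p i) := by
    simp only [← mul_sum, hc1, mul_one]
  simp only [smul_eq_mul, Fintype.sum_prod_type, hmean, hlog, ← sum_div, sum_sub_distrib,
    hentropy] at jensen
  linarith

section Klein

variable {n : Type*} [Fintype n] [DecidableEq n]

lemma msqrt_eq_cfc {A : Matrix n n ℂ} (hA : A.PosSemidef) : msqrt A = hA.1.cfc Real.sqrt := by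
  rw [msqrt, dif_pos hA]
  rfl

lemma trace_mul_mlog {A B : Matrix n n ℂ} (hA : A.IsHermitian) (hB : B.IsHermitian) :
    trace (A * mlog B) = ∑ i, ∑ j,
      (hA.eigenvalues i * Real.log (hB.eigenvalues j) * eigenOverlap hA hB i j : ℝ) := by
  have hA_cfc : hA.cfc id = A := by rw [← hA.cfc_eq]; exact cfc_id ℝ A hA
  rw [mlog, dif_pos hB]
  conv_lhs => rw [← hA_cfc]
  exact trace_cfc_mul_cfc hA hB id Real.log

theorem neg_two_mul_log_trace_msqrt_mul_msqrt_le_relEnt {ρ σ : Matrix n n ℂ} (hρ : ρ.PosDef)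
    (hρ1 : ρ.trace = 1) (hσ : σ.PosDef) :
    -2 * Real.log (trace (msqrt ρ * msqrt σ)).re ≤ relEnt ρ σ := by
  have hp1 : ∑ i, hρ.1.eigenvalues i = 1 := by
    simpa using congrArg Complex.re (hρ.1.trace_eq_sum_eigenvalues.symm.trans hρ1)
  have hsqrt := trace_cfc_mul_cfc hρ.1 hσ.1 Real.sqrt Real.sqrt
  rw [← msqrt_eq_cfc hρ.posSemidef, ← msqrt_eq_cfc hσ.posSemidef] at hsqrt
  have hself := trace_mul_mlog hρ.1 hρ.1
  simp only [eigenOverlap_self, one_apply, mul_ite, mul_one, mul_zero, Finset.sum_ite_eq,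
    Finset.mem_univ, if_true] at hself
  rw [relEnt, mul_sub, trace_sub, hself, trace_mul_mlog hρ.1 hσ.1, hsqrt]
  simp only [Complex.sub_re, Complex.ofReal_re]
  exact neg_two_mul_log_sum_sqrt_le hρ.eigenvalues_pos hp1 hσ.eigenvalues_pos
    (fun _ _ => Complex.normSq_nonneg _) (sum_eigenOverlap hρ.1 hσ.1)

end Klein

section Tripartite

variable {α β γ : Type*}

lemma isHermitian_embAC [DecidableEq β] {X : Matrix (α × γ) (α × γ) ℂ} (hX : X.IsHermitian) :
    (embAC (β := β) X).IsHermitian := by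
  ext p q
  simp only [conjTranspose_apply, embAC, eq_comm (a := q.2.1)]
  split_ifs <;> simp [hX.apply]

lemma isHermitian_embBC [DecidableEq α] {X : Matrix (β × γ) (β × γ) ℂ} (hX : X.IsHermitian) :
    (embBC (α := α) X).IsHermitian := by
  ext p q
  simp only [conjTranspose_apply, embBC, eq_comm (a := q.1)]
  split_ifs <;> simp [hX.apply]

variable [Fintype α] [Fintype β] [Fintype γ]

lemma trace_mul_embAC [DecidableEq β] (M : Matrix (α × β × γ) (α × β × γ) ℂ)
    (X : Matrix (α × γ) (α × γ) ℂ) : trace (M * embAC X) = trace (ptrB M * X) := by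
  simp only [trace, diag, mul_apply, Fintype.sum_prod_type, embAC, ptrB, mul_ite, mul_zero,
    Finset.sum_mul]
  simp only [Finset.sum_comm (γ := β), Finset.sum_ite_eq', Finset.mem_univ, if_true]

lemma trace_mul_embBC [DecidableEq α] (M : Matrix (α × β × γ) (α × β × γ) ℂ)
    (X : Matrix (β × γ) (β × γ) ℂ) : trace (M * embBC X) = trace (ptrA M * X) := by
  simp only [trace, diag, mul_apply, Fintype.sum_prod_type, embBC, ptrA, mul_ite, mul_zero,
    Finset.sum_mul]
  simp only [Finset.sum_comm (γ := α), Finset.sum_ite_eq', Finset.mem_univ, if_true]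

variable [DecidableEq α] [DecidableEq β] [DecidableEq γ]

lemma isHermitian_log_sigOp2 (rho : Matrix (α × β × γ) (α × β × γ) ℂ) :
    (embAC (β := β) (mlog (ptrB rho)) + embBC (mlog (ptrA rho))).IsHermitian :=
  (isHermitian_embAC (isHermitian_mlog _)).add (isHermitian_embBC (isHermitian_mlog _))

lemma posDef_sigOp2 (rho : Matrix (α × β × γ) (α × β × γ) ℂ) : (sigOp2 rho).PosDef :=
  posDef_mexp (isHermitian_log_sigOp2 rho)

lemma vN_ptrB_add_vN_ptrA_sub_vN_eq_relEnt (rho : Matrix (α × β × γ) (α × β × γ) ℂ) :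
    vN (ptrB rho) + vN (ptrA rho) - vN rho = relEnt rho (sigOp2 rho) := by
  rw [relEnt, sigOp2, mlog_mexp (isHermitian_log_sigOp2 rho), vN, vN, vN,
    ← trace_mul_embAC rho, ← trace_mul_embBC rho, mul_sub, mul_add, trace_sub, trace_add,
    Complex.sub_re, Complex.add_re]
  ring

end Tripartite

theorem subadditivity_lower_bound_general {α β γ : Type*} [Fintype α] [DecidableEq α] [Fintype β] [DecidableEq β]
    [Fintype γ] [DecidableEq γ]
    (rho : Matrix (α × β × γ) (α × β × γ) ℂ)
    (hrho : rho.PosDef) (hrho1 : rho.trace = 1) :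
    vN (ptrB rho) + vN (ptrA rho) - vN rho ≥
      -2 * Real.log (Matrix.trace (msqrt rho * msqrt (sigOp2 rho))).re := by
  rw [vN_ptrB_add_vN_ptrA_sub_vN_eq_relEnt, ge_iff_le]
  exact neg_two_mul_log_trace_msqrt_mul_msqrt_le_relEnt hrho hrho1 (posDef_sigOp2 rho)

theorem subadditivity_lower_bound {α β γ : Type*} [Fintype α] [DecidableEq α] [Fintype β] [DecidableEq β]
    [Fintype γ] [DecidableEq γ]
    (rho : Matrix (α × β × γ) (α × β × γ) ℂ)
    (hrho : rho.PosDef) (hrho1 : rho.trace = 1)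
    (hAC : (ptrB rho).PosDef) (hBC : (ptrA rho).PosDef) (hC : (ptrAB rho).PosDef) :
    vN (ptrB rho) + vN (ptrA rho) - vN rho ≥
      -2 * Real.log (Matrix.trace (msqrt rho * msqrt (sigOp2 rho))).re :=
  subadditivity_lower_bound_general rho hrho hrho1
end
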